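/- Define σ : ℍ × ℍ → ℝ by σ(q, p) = |q − p| if p and q lie on a common complex plane L_I = ℝ + I·ℝ for some I ∈ 𝕊, and σ(q, p) = √([Re(q) − Re(p)]² + [|Im(q)| + |Im(p)|]²) otherwise. Then σ is a distance (metric) on ℍ: it is nonnegative, vanishes exactly on the diagonal, is symmetric, and satisfies the triangle inequality. -/

import Mathlib

open Quaternion

/-- `p` and `q` lie on a common complex plane `L_I = ℝ + Iℝ` for some imaginary unit `I`. -/
def SameSlice (q p : ℍ[ℝ]) : Prop :=
  ∃ I : ℍ[ℝ], I ^ 2 = -1 ∧ (∃ a b : ℝ, q = (a : ℍ[ℝ]) + b • I) ∧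
    (∃ c d : ℝ, p = (c : ℍ[ℝ]) + d • I)

-- The distance `σ` of Gentili–Stoppato.
open Classical in
noncomputable def sigmaDist (q p : ℍ[ℝ]) : ℝ :=
  if SameSlice q p then ‖q - p‖
  else Real.sqrt ((q.re - p.re) ^ 2 + (‖q.im‖ + ‖p.im‖) ^ 2)

/-!
Rotating `q` about the real axis into the closed upper half-plane gives
`Q = re q + ‖im q‖ i ∈ ℂ`. Inside a slice `σ` is the Euclidean distance, which dominates `|Q - P|`;
across slices `σ(q, p) = |Q - conj P|`, which dominates the Euclidean distance. Hence `σ` is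
positive off the diagonal, and a path `q → s → p` between different slices can be rerouted in `ℂ`
through `conj S` on a leg that changes slice. If neither leg does, `s` is real, since two slices
meeting off the real axis coincide, and then `conj S = S`.
-/

open ComplexConjugate

namespace Quaternion

theorem re_eq_zero_of_sq_eq_neg_one {I : ℍ[ℝ]} (h : I ^ 2 = -1) : I.re = 0 := by
  have hsq : normSq I ^ 2 = 1 := by rw [← map_pow, h, normSq_neg, map_one]
  have hnorm : normSq I = 1 := (pow_eq_one_iff_of_nonneg normSq_nonneg two_ne_zero).mp hsq
  exact sq_eq_neg_normSq.mp (by rw [h, hnorm, coe_one])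

theorem im_coe_add_smul {I : ℍ[ℝ]} (hI : I.re = 0) (c d : ℝ) :
    ((c : ℍ[ℝ]) + d • I).im = d • I := by
  have hIm : I.im = I := by simpa [hI] using I.re_add_im
  simp [im_coe, hIm]

theorem exists_sq_eq_neg_one_im_eq_smul (q : ℍ[ℝ]) :
    ∃ I : ℍ[ℝ], I ^ 2 = -1 ∧ ∃ b : ℝ, q.im = b • I := by
  by_cases hq : q.im = 0
  · refine ⟨ofComplex Complex.I, ?_, 0, by rw [hq, zero_smul]⟩
    rw [← map_pow, Complex.I_sq, map_neg, map_one]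
  · have hn : ‖q.im‖ ≠ 0 := norm_ne_zero_iff.mpr hq
    refine ⟨‖q.im‖⁻¹ • q.im, ?_, ‖q.im‖, by rw [smul_inv_smul₀ hn]⟩
    rw [smul_pow, im_sq, normSq_eq_norm_mul_self, smul_neg, ← coe_mul_eq_smul, ← sq, ← coe_mul,
      inv_pow, inv_mul_cancel₀ (pow_ne_zero 2 hn), coe_one]

theorem sq_norm_eq_re_sq_add_sq_norm_im (q : ℍ[ℝ]) : ‖q‖ ^ 2 = q.re ^ 2 + ‖q.im‖ ^ 2 := by
  simp only [sq, ← normSq_eq_norm_mul_self, normSq_def', re_im, imI_im, imJ_im, imK_im]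
  ring

end Quaternion

theorem sameSlice_refl (q : ℍ[ℝ]) : SameSlice q q := by
  obtain ⟨I, hI, b, hb⟩ := exists_sq_eq_neg_one_im_eq_smul q
  have hq : q = (q.re : ℍ[ℝ]) + b • I := by rw [← hb, re_add_im]
  exact ⟨I, hI, ⟨_, _, hq⟩, ⟨_, _, hq⟩⟩

theorem SameSlice.symm {q p : ℍ[ℝ]} (h : SameSlice q p) : SameSlice p q :=
  let ⟨I, hI, hq, hp⟩ := h
  ⟨I, hI, hp, hq⟩

theorem SameSlice.trans {q s p : ℍ[ℝ]} (hqs : SameSlice q s) (hsp : SameSlice s p)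
    (hs : s.im ≠ 0) : SameSlice q p := by
  obtain ⟨I, hI, hq, c, d, hsI⟩ := hqs
  obtain ⟨J, hJ, ⟨c', d', hsJ⟩, e, f, hp⟩ := hsp
  have hIJ : d • I = d' • J := by
    rw [← im_coe_add_smul (re_eq_zero_of_sq_eq_neg_one hI), ← hsI,
      hsJ, im_coe_add_smul (re_eq_zero_of_sq_eq_neg_one hJ)]
  have hd' : d' ≠ 0 := by
    rintro rfl
    exact hs (by rw [hsI, im_coe_add_smul (re_eq_zero_of_sq_eq_neg_one hI), hIJ, zero_smul])
  have hJ : J = (d'⁻¹ * d) • I := by rw [mul_smul, hIJ, inv_smul_smul₀ hd']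
  exact ⟨I, hI, hq, e, f * (d'⁻¹ * d), by rw [hp, hJ, smul_smul]⟩

theorem Complex.norm_le_norm_of_re_eq_of_abs_im_le {z w : ℂ} (hre : z.re = w.re)
    (him : |z.im| ≤ |w.im|) : ‖z‖ ≤ ‖w‖ := by
  rw [← sq_le_sq₀ (norm_nonneg z) (norm_nonneg w), Complex.sq_norm, Complex.sq_norm,
    Complex.normSq_apply, Complex.normSq_apply, hre]
  nlinarith [sq_le_sq.mpr him]

noncomputable def slicePoint (q : ℍ[ℝ]) : ℂ := ⟨q.re, ‖q.im‖⟩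

theorem norm_slicePoint (q : ℍ[ℝ]) : ‖slicePoint q‖ = ‖q‖ := by
  rw [← sq_eq_sq₀ (norm_nonneg _) (norm_nonneg _), Complex.sq_norm, Complex.normSq_apply,
    sq_norm_eq_re_sq_add_sq_norm_im]
  simp only [slicePoint]
  ring

theorem norm_slicePoint_sub_le (q p : ℍ[ℝ]) : ‖slicePoint q - slicePoint p‖ ≤ ‖q - p‖ := by
  rw [← norm_slicePoint (q - p)]
  refine Complex.norm_le_norm_of_re_eq_of_abs_im_le (by simp [slicePoint]) ?_
  simpa [slicePoint] using abs_norm_sub_norm_le q.im p.im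

theorem norm_sub_le_norm_slicePoint_sub_conj (q p : ℍ[ℝ]) :
    ‖q - p‖ ≤ ‖slicePoint q - conj (slicePoint p)‖ := by
  rw [← norm_slicePoint (q - p)]
  refine Complex.norm_le_norm_of_re_eq_of_abs_im_le (by simp [slicePoint]) ?_
  simpa [slicePoint, abs_of_nonneg (add_nonneg (norm_nonneg q.im) (norm_nonneg p.im))] using
    norm_sub_le q.im p.im

theorem norm_slicePoint_sub_conj_comm (q p : ℍ[ℝ]) :
    ‖slicePoint q - conj (slicePoint p)‖ = ‖slicePoint p - conj (slicePoint q)‖ := by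
  rw [← Complex.norm_conj, map_sub, Complex.conj_conj, norm_sub_rev]

theorem conj_slicePoint_of_im_eq_zero {s : ℍ[ℝ]} (hs : s.im = 0) :
    conj (slicePoint s) = slicePoint s := by
  simp [slicePoint, Complex.ext_iff, hs]

theorem sigmaDist_of_sameSlice {q p : ℍ[ℝ]} (h : SameSlice q p) : sigmaDist q p = ‖q - p‖ :=
  if_pos h

theorem sigmaDist_of_not_sameSlice {q p : ℍ[ℝ]} (h : ¬SameSlice q p) :
    sigmaDist q p = ‖slicePoint q - conj (slicePoint p)‖ := by
  rw [sigmaDist, if_neg h, Complex.norm_def, Complex.normSq_apply]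
  simp only [slicePoint, Complex.sub_re, Complex.sub_im, Complex.conj_re, Complex.conj_im]
  ring_nf

theorem norm_sub_le_sigmaDist (q p : ℍ[ℝ]) : ‖q - p‖ ≤ sigmaDist q p := by
  by_cases h : SameSlice q p
  · exact (sigmaDist_of_sameSlice h).ge
  · exact (sigmaDist_of_not_sameSlice h).ge.trans' (norm_sub_le_norm_slicePoint_sub_conj q p)

theorem norm_slicePoint_sub_le_sigmaDist (q p : ℍ[ℝ]) :
    ‖slicePoint q - slicePoint p‖ ≤ sigmaDist q p :=
  (norm_slicePoint_sub_le q p).trans (norm_sub_le_sigmaDist q p)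

theorem sigmaDist_nonneg (q p : ℍ[ℝ]) : 0 ≤ sigmaDist q p :=
  (norm_nonneg _).trans (norm_sub_le_sigmaDist q p)

theorem eq_of_sigmaDist_eq_zero {q p : ℍ[ℝ]} (h : sigmaDist q p = 0) : q = p := by
  have hle := norm_sub_le_sigmaDist q p
  rw [h] at hle
  exact sub_eq_zero.mp (norm_le_zero_iff.mp hle)

theorem sigmaDist_self (q : ℍ[ℝ]) : sigmaDist q q = 0 := by
  rw [sigmaDist_of_sameSlice (sameSlice_refl q), sub_self, norm_zero]

theorem sigmaDist_comm (q p : ℍ[ℝ]) : sigmaDist q p = sigmaDist p q := by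
  by_cases h : SameSlice q p
  · rw [sigmaDist_of_sameSlice h, sigmaDist_of_sameSlice h.symm, norm_sub_rev]
  · rw [sigmaDist_of_not_sameSlice h, sigmaDist_of_not_sameSlice (mt SameSlice.symm h),
      norm_slicePoint_sub_conj_comm]

theorem sigmaDist_triangle_of_not_sameSlice {q p : ℍ[ℝ]} (hqp : ¬SameSlice q p) (s : ℍ[ℝ]) :
    sigmaDist q p ≤ sigmaDist q s + sigmaDist s p := by
  set Q := slicePoint q
  set P := slicePoint p
  set S := slicePoint s
  have hmirror : ‖Q - conj P‖ ≤ ‖Q - conj S‖ + ‖S - P‖ := by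
    simpa only [← map_sub, Complex.norm_conj] using
      norm_sub_le_norm_sub_add_norm_sub Q (conj S) (conj P)
  rw [sigmaDist_of_not_sameSlice hqp]
  by_cases hqs : SameSlice q s
  · by_cases hsp : SameSlice s p
    · have hs : s.im = 0 := by_contra fun hs ↦ hqp (hqs.trans hsp hs)
      calc ‖Q - conj P‖ ≤ ‖Q - conj S‖ + ‖S - P‖ := hmirror
        _ = ‖Q - S‖ + ‖S - P‖ := by rw [conj_slicePoint_of_im_eq_zero hs]
        _ ≤ sigmaDist q s + sigmaDist s p :=
          add_le_add (norm_slicePoint_sub_le_sigmaDist q s) (norm_slicePoint_sub_le_sigmaDist s p)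
    · calc ‖Q - conj P‖ ≤ ‖Q - S‖ + ‖S - conj P‖ := norm_sub_le_norm_sub_add_norm_sub _ _ _
        _ ≤ sigmaDist q s + sigmaDist s p :=
          add_le_add (norm_slicePoint_sub_le_sigmaDist q s) (sigmaDist_of_not_sameSlice hsp).ge
  · calc ‖Q - conj P‖ ≤ ‖Q - conj S‖ + ‖S - P‖ := hmirror
      _ ≤ sigmaDist q s + sigmaDist s p :=
        add_le_add (sigmaDist_of_not_sameSlice hqs).ge (norm_slicePoint_sub_le_sigmaDist s p)

theorem sigmaDist_triangle (q p s : ℍ[ℝ]) : sigmaDist q p ≤ sigmaDist q s + sigmaDist s p := by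
  by_cases hqp : SameSlice q p
  · calc sigmaDist q p = ‖q - p‖ := sigmaDist_of_sameSlice hqp
      _ ≤ ‖q - s‖ + ‖s - p‖ := norm_sub_le_norm_sub_add_norm_sub q s p
      _ ≤ sigmaDist q s + sigmaDist s p :=
        add_le_add (norm_sub_le_sigmaDist q s) (norm_sub_le_sigmaDist s p)
  · exact sigmaDist_triangle_of_not_sameSlice hqp s

theorem sigmaDist_is_metric :
    (∀ q p : ℍ[ℝ], 0 ≤ sigmaDist q p) ∧
    (∀ q p : ℍ[ℝ], sigmaDist q p = 0 ↔ q = p) ∧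
    (∀ q p : ℍ[ℝ], sigmaDist q p = sigmaDist p q) ∧
    (∀ q p s : ℍ[ℝ], sigmaDist q p ≤ sigmaDist q s + sigmaDist s p) := by
  refine ⟨sigmaDist_nonneg, fun q p ↦ ⟨eq_of_sigmaDist_eq_zero, ?_⟩, sigmaDist_comm,
    sigmaDist_triangle⟩
  rintro rfl
  exact sigmaDist_self q
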